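/- For every unit vector ξ in ℝ⁷ there exists a linear isometry F : ℝ⁶ → ℝ⁷ (from EuclideanSpace ℝ (Fin 6)) whose image is the hyperplane ξ⊥, such that for all x, y, z ∈ ℝ⁶: φ₀(ξ, Fx, Fy) = (f^{16} − f^{25} − f^{34})(x,y) and φ₀(Fx, Fy, Fz) = (f^{123} + f^{145} + f^{246} − f^{356})(x,y,z), where f¹,…,f⁶ is the dual standard basis of ℝ⁶. (This is the pointwise content of Theorem 5: every unit vector ξ induces on ξ⊥ a standard SU(3)-structure, with symplectic form ω_ξ = ι_ξφ₀ and Re Ω_ξ = φ₀|_{ξ⊥} equivalent to the standard model; it expresses the transitivity of G₂ on the unit sphere S⁶ with stabilizer SU(3).) -/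

import Mathlib

/-!
On `ℝ⁷` the cross product `u × v`, defined by `⟪u × v, w⟫ = φ₀(u, v, w)`, satisfies the
octonionic identities `u × (u × v) = ⟪u, v⟫ u - ⟪u, u⟫ v` and its polarisation. From these, any
orthonormal `a, b, c` with `c ⊥ a × b` generates a frame `a, b, a×b, c, a×c, b×c, a×(b×c)` whose
cross products follow the same table as the standard basis, so the isometry carrying the standard
basis to it preserves `φ₀`. Every unit vector `ξ` starts such a triple, hence some `g ∈ G₂` maps
`e₀` to `ξ`, and the claim for `ξ` is transported from the claim for `e₀`, where `ξ⊥` is a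
coordinate hyperplane and the two forms are read off from `φ₀ = e⁰ ∧ ω + Re Ω`.
-/

open scoped RealInnerProductSpace

noncomputable section

/-- `V7` is ℝ⁷ with its Euclidean inner product. -/
abbrev V7 : Type := EuclideanSpace ℝ (Fin 7)

/-- Evaluation of the wedge product `eⁱ ∧ eʲ ∧ eᵏ` of dual basis 1-forms on three vectors. -/
def w3 (i j k : Fin 7) (u v w : V7) : ℝ :=
  Matrix.det !![u i, u j, u k; v i, v j, v k; w i, w j, w k]

/-- Evaluation of the wedge product `eⁱ ∧ eʲ ∧ eᵏ ∧ eˡ` on four vectors. -/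
def w4 (i j k l : Fin 7) (u v w z : V7) : ℝ :=
  Matrix.det !![u i, u j, u k, u l; v i, v j, v k, v l;
                w i, w j, w k, w l; z i, z j, z k, z l]

/-- The standard G₂ 3-form φ₀ = e¹²³+e¹⁴⁵+e¹⁶⁷+e²⁴⁶−e²⁵⁷−e³⁴⁷−e³⁵⁶ (0-indexed). -/
def phi0 (u v w : V7) : ℝ :=
  w3 0 1 2 u v w + w3 0 3 4 u v w + w3 0 5 6 u v w + w3 1 3 5 u v w
    - w3 1 4 6 u v w - w3 2 3 6 u v w - w3 2 4 5 u v w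

/-- The 4-form ψ₀ = ∗φ₀ = e⁴⁵⁶⁷+e²³⁶⁷+e²³⁴⁵+e¹³⁵⁷−e¹³⁴⁶−e¹²⁵⁶−e¹²⁴⁷ (0-indexed). -/
def psi0 (u v w z : V7) : ℝ :=
  w4 3 4 5 6 u v w z + w4 1 2 5 6 u v w z + w4 1 2 3 4 u v w z + w4 0 2 4 6 u v w z
    - w4 0 2 3 5 u v w z - w4 0 1 4 5 u v w z - w4 0 1 3 6 u v w z

/-- ℝ⁶ with its Euclidean inner product. -/
abbrev V6 : Type := EuclideanSpace ℝ (Fin 6)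

/-- Evaluation of f ⁱ ∧ f ʲ on two vectors of ℝ⁶. -/
def f2 (i j : Fin 6) (x y : V6) : ℝ := x i * y j - x j * y i

/-- Evaluation of f ⁱ ∧ f ʲ ∧ f ᵏ on three vectors of ℝ⁶. -/
def f3 (i j k : Fin 6) (x y z : V6) : ℝ :=
  Matrix.det !![x i, x j, x k; y i, y j, y k; z i, z j, z k]

/-- The standard symplectic model form f¹⁶ − f²⁵ − f³⁴ on ℝ⁶ (0-indexed). -/
def omega6 (x y : V6) : ℝ := f2 0 5 x y - f2 1 4 x y - f2 2 3 x y

/-- The standard model form f¹²³ + f¹⁴⁵ + f²⁴⁶ − f³⁵⁶ on ℝ⁶ (0-indexed). -/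
def Omega6 (x y z : V6) : ℝ :=
  f3 0 1 2 x y z + f3 0 3 4 x y z + f3 1 3 5 x y z - f3 2 4 5 x y z

lemma exists_norm_eq_one_forall_inner_eq_zero {E : Type*} [NormedAddCommGroup E]
    [InnerProductSpace ℝ E] [FiniteDimensional ℝ E] (s : Finset E)
    (hs : s.card < Module.finrank ℝ E) : ∃ v : E, ‖v‖ = 1 ∧ ∀ u ∈ s, ⟪u, v⟫ = 0 := by
  have hK : Submodule.span ℝ (s : Set E) ≠ ⊤ :=
    (Submodule.lt_top_of_finrank_lt_finrank ((finrank_span_finset_le_card s).trans_lt hs)).ne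
  obtain ⟨v, hv, hv0⟩ :=
    Submodule.exists_mem_ne_zero_of_ne_bot (mt Submodule.orthogonal_eq_bot_iff.mp hK)
  refine ⟨‖v‖⁻¹ • v, norm_smul_inv_norm hv0, fun u hu => ?_⟩
  rw [real_inner_smul_right,
    Submodule.inner_right_of_mem_orthogonal (Submodule.subset_span hu) hv, mul_zero]

lemma LinearIsometryEquiv.image_orthogonal_span_singleton {𝕜 E F : Type*} [RCLike 𝕜]
    [NormedAddCommGroup E] [InnerProductSpace 𝕜 E] [NormedAddCommGroup F] [InnerProductSpace 𝕜 F]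
    (g : E ≃ₗᵢ[𝕜] F) (v : E) :
    g '' ((Submodule.span 𝕜 {v})ᗮ : Submodule 𝕜 E) = ((Submodule.span 𝕜 {g v})ᗮ : Submodule 𝕜 F) := by
  have hmap := Submodule.map_orthogonal_equiv (Submodule.span 𝕜 {v}) g
  rw [Submodule.map_span, Set.image_singleton] at hmap
  simpa using congrArg SetLike.coe hmap

namespace G2

def crossVec (u v : V7) : V7 :=
  !₂[(u 1 * v 2 - u 2 * v 1) + (u 3 * v 4 - u 4 * v 3) + (u 5 * v 6 - u 6 * v 5),
    -(u 0 * v 2 - u 2 * v 0) + (u 3 * v 5 - u 5 * v 3) - (u 4 * v 6 - u 6 * v 4),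
    (u 0 * v 1 - u 1 * v 0) - (u 3 * v 6 - u 6 * v 3) - (u 4 * v 5 - u 5 * v 4),
    -(u 0 * v 4 - u 4 * v 0) - (u 1 * v 5 - u 5 * v 1) + (u 2 * v 6 - u 6 * v 2),
    (u 0 * v 3 - u 3 * v 0) + (u 1 * v 6 - u 6 * v 1) + (u 2 * v 5 - u 5 * v 2),
    -(u 0 * v 6 - u 6 * v 0) + (u 1 * v 3 - u 3 * v 1) - (u 2 * v 4 - u 4 * v 2),
    (u 0 * v 5 - u 5 * v 0) - (u 1 * v 4 - u 4 * v 1) - (u 2 * v 3 - u 3 * v 2)]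

def cross : V7 →ₗ[ℝ] V7 →ₗ[ℝ] V7 :=
  LinearMap.mk₂ ℝ crossVec
    (fun u u' v => by ext k; fin_cases k <;> simp [crossVec] <;> ring)
    (fun c u v => by ext k; fin_cases k <;> simp [crossVec] <;> ring)
    (fun u v v' => by ext k; fin_cases k <;> simp [crossVec] <;> ring)
    (fun c u v => by ext k; fin_cases k <;> simp [crossVec] <;> ring)

lemma inner_eq_sum_seven (u v : V7) : ⟪u, v⟫ =
    u 0 * v 0 + u 1 * v 1 + u 2 * v 2 + u 3 * v 3 + u 4 * v 4 + u 5 * v 5 + u 6 * v 6 := by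
  simp [PiLp.inner_apply, Fin.sum_univ_seven]; ring

lemma phi0_eq_inner_cross (u v w : V7) : phi0 u v w = ⟪cross u v, w⟫ := by
  simp [phi0, w3, Matrix.det_fin_three, inner_eq_sum_seven, cross, crossVec]; ring

lemma cross_anticomm (u v : V7) : cross v u = -cross u v := by
  ext k; fin_cases k <;> simp [cross, crossVec] <;> ring

lemma cross_self (u : V7) : cross u u = 0 := by
  ext k; fin_cases k <;> simp [cross, crossVec] <;> ring

lemma inner_cross_self_left (u v : V7) : ⟪u, cross u v⟫ = 0 := by
  simp [inner_eq_sum_seven, cross, crossVec]; ring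

lemma inner_cross_self_right (u v : V7) : ⟪v, cross u v⟫ = 0 := by
  simp [inner_eq_sum_seven, cross, crossVec]; ring

lemma inner_cross_cyclic (u v w : V7) : ⟪cross u v, w⟫ = ⟪cross v w, u⟫ := by
  simp [inner_eq_sum_seven, cross, crossVec]; ring

lemma inner_cross_cross (u v w : V7) :
    ⟪cross u v, cross u w⟫ = ⟪u, u⟫ * ⟪v, w⟫ - ⟪u, v⟫ * ⟪u, w⟫ := by
  simp only [inner_eq_sum_seven]
  simp [cross, crossVec]
  ring

lemma cross_cross_self (u v : V7) : cross u (cross u v) = ⟪u, v⟫ • u - ⟪u, u⟫ • v := by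
  rw [inner_eq_sum_seven, inner_eq_sum_seven]
  ext k; fin_cases k <;> simp [cross, crossVec] <;> ring

lemma cross_cross_add_cross_cross (x y z : V7) : cross x (cross y z) + cross y (cross x z)
    = ⟪x, z⟫ • y + ⟪y, z⟫ • x - (2 * ⟪x, y⟫) • z := by
  rw [inner_eq_sum_seven, inner_eq_sum_seven, inner_eq_sum_seven]
  ext k; fin_cases k <;> simp [cross, crossVec] <;> ring

lemma cross_cross_of_orthogonal {x y z : V7} (hxy : ⟪x, y⟫ = 0) (hxz : ⟪x, z⟫ = 0)
    (hyz : ⟪y, z⟫ = 0) : cross x (cross y z) = -cross y (cross x z) := by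
  apply eq_neg_of_add_eq_zero_left
  rw [cross_cross_add_cross_cross, hxy, hxz, hyz]
  simp

structure IsQuaternionTriple (u v w : V7) : Prop where
  inner_self_left : ⟪u, u⟫ = 1
  inner_self_right : ⟪v, v⟫ = 1
  inner_eq_zero : ⟪u, v⟫ = 0
  cross_eq : cross u v = w

namespace IsQuaternionTriple

variable {u v w : V7}

lemma rotate (h : IsQuaternionTriple u v w) : IsQuaternionTriple v w u where
  inner_self_left := h.inner_self_right
  inner_self_right := by
    rw [← h.cross_eq, inner_cross_cross, h.inner_self_left, h.inner_self_right,
      h.inner_eq_zero]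
    ring
  inner_eq_zero := by rw [← h.cross_eq]; exact inner_cross_self_right u v
  cross_eq := by
    rw [← h.cross_eq, cross_anticomm v u, map_neg, cross_cross_self, real_inner_comm,
      h.inner_eq_zero, h.inner_self_right]
    simp

lemma cross_table (h : IsQuaternionTriple u v w) :
    cross u v = w ∧ cross v w = u ∧ cross w u = v ∧
      cross v u = -w ∧ cross w v = -u ∧ cross u w = -v := by
  have h' := h.rotate
  have h'' := h'.rotate
  refine ⟨h.cross_eq, h'.cross_eq, h''.cross_eq, ?_, ?_, ?_⟩
  · rw [cross_anticomm, h.cross_eq]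
  · rw [cross_anticomm, h'.cross_eq]
  · rw [cross_anticomm, h''.cross_eq]

lemma inner_table (h : IsQuaternionTriple u v w) :
    ⟪u, u⟫ = 1 ∧ ⟪v, v⟫ = 1 ∧ ⟪w, w⟫ = 1 ∧ ⟪u, v⟫ = 0 ∧ ⟪v, w⟫ = 0 ∧ ⟪w, u⟫ = 0 ∧
      ⟪v, u⟫ = 0 ∧ ⟪w, v⟫ = 0 ∧ ⟪u, w⟫ = 0 := by
  have h' := h.rotate
  have h'' := h'.rotate
  refine ⟨h.inner_self_left, h'.inner_self_left, h''.inner_self_left, h.inner_eq_zero,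
    h'.inner_eq_zero, h''.inner_eq_zero, ?_, ?_, ?_⟩
  · rw [real_inner_comm, h.inner_eq_zero]
  · rw [real_inner_comm, h'.inner_eq_zero]
  · rw [real_inner_comm, h''.inner_eq_zero]

end IsQuaternionTriple

/-- The seven triples are the seven terms of `φ₀`, each reordered to carry a plus sign. -/
structure IsG2Frame (b : Fin 7 → V7) : Prop where
  triple_012 : IsQuaternionTriple (b 0) (b 1) (b 2)
  triple_034 : IsQuaternionTriple (b 0) (b 3) (b 4)
  triple_056 : IsQuaternionTriple (b 0) (b 5) (b 6)
  triple_135 : IsQuaternionTriple (b 1) (b 3) (b 5)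
  triple_416 : IsQuaternionTriple (b 4) (b 1) (b 6)
  triple_326 : IsQuaternionTriple (b 3) (b 2) (b 6)
  triple_425 : IsQuaternionTriple (b 4) (b 2) (b 5)

lemma isG2Frame_single : IsG2Frame (fun i => EuclideanSpace.single i 1) := by
  constructor <;> constructor <;> first
    | simp [EuclideanSpace.inner_single_left]
    | ext k; fin_cases k <;> simp [cross, crossVec]

namespace IsG2Frame

variable {b : Fin 7 → V7}

lemma orthonormal (hb : IsG2Frame b) : Orthonormal ℝ b := by
  rw [orthonormal_iff_ite]
  intro i j
  fin_cases i <;> fin_cases j <;>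
    simp only [Fin.reduceFinMk, hb.triple_012.inner_table, hb.triple_034.inner_table,
      hb.triple_056.inner_table, hb.triple_135.inner_table, hb.triple_416.inner_table,
      hb.triple_326.inner_table, hb.triple_425.inner_table] <;> simp

def toOrthonormalBasis (hb : IsG2Frame b) : OrthonormalBasis (Fin 7) ℝ V7 :=
  (basisOfOrthonormalOfCardEqFinrank hb.orthonormal (by simp)).toOrthonormalBasis
    (by simpa using hb.orthonormal)

@[simp]
lemma coe_toOrthonormalBasis (hb : IsG2Frame b) : ⇑hb.toOrthonormalBasis = b := by
  simp [toOrthonormalBasis]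

lemma cross_repr_symm (hb : IsG2Frame b) (u v : V7) :
    cross (hb.toOrthonormalBasis.repr.symm u) (hb.toOrthonormalBasis.repr.symm v) =
      hb.toOrthonormalBasis.repr.symm (cross u v) := by
  let g : V7 →ₗ[ℝ] V7 := hb.toOrthonormalBasis.repr.symm.toLinearEquiv
  have hs := isG2Frame_single
  -- both frames have the cross-product table of their seven triples
  have hg : cross.compl₁₂ g g = cross.compr₂ g := by
    refine LinearMap.ext_basis (EuclideanSpace.basisFun (Fin 7) ℝ).toBasis
      (EuclideanSpace.basisFun (Fin 7) ℝ).toBasis fun i j => ?_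
    fin_cases i <;> fin_cases j <;>
      simp only [Fin.reduceFinMk, LinearMap.compl₁₂_apply, LinearMap.compr₂_apply,
        OrthonormalBasis.coe_toBasis, EuclideanSpace.basisFun_apply, g, LinearEquiv.coe_coe,
        LinearIsometryEquiv.coe_toLinearEquiv, OrthonormalBasis.repr_symm_single,
        coe_toOrthonormalBasis, cross_self, map_zero, map_neg,
        hs.triple_012.cross_table, hs.triple_034.cross_table, hs.triple_056.cross_table,
        hs.triple_135.cross_table, hs.triple_416.cross_table, hs.triple_326.cross_table,
        hs.triple_425.cross_table,
        hb.triple_012.cross_table, hb.triple_034.cross_table, hb.triple_056.cross_table,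
        hb.triple_135.cross_table, hb.triple_416.cross_table, hb.triple_326.cross_table,
        hb.triple_425.cross_table]
  exact LinearMap.congr_fun₂ hg u v

lemma phi0_repr_symm (hb : IsG2Frame b) (u v w : V7) :
    phi0 (hb.toOrthonormalBasis.repr.symm u) (hb.toOrthonormalBasis.repr.symm v)
      (hb.toOrthonormalBasis.repr.symm w) = phi0 u v w := by
  rw [phi0_eq_inner_cross, cross_repr_symm, LinearIsometryEquiv.inner_map_map,
    phi0_eq_inner_cross]

end IsG2Frame

def cayleyFrame (a b c : V7) : Fin 7 → V7 :=
  ![a, b, cross a b, c, cross a c, cross b c, cross a (cross b c)]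

lemma isG2Frame_cayleyFrame {a b c : V7} (ha : ⟪a, a⟫ = 1) (hb : ⟪b, b⟫ = 1) (hc : ⟪c, c⟫ = 1)
    (hab : ⟪a, b⟫ = 0) (hac : ⟪a, c⟫ = 0) (hbc : ⟪b, c⟫ = 0) (habc : ⟪cross a b, c⟫ = 0) :
    IsG2Frame (cayleyFrame a b c) := by
  have t012 : IsQuaternionTriple a b (cross a b) := ⟨ha, hb, hab, rfl⟩
  have t034 : IsQuaternionTriple a c (cross a c) := ⟨ha, hc, hac, rfl⟩
  have t135 : IsQuaternionTriple b c (cross b c) := ⟨hb, hc, hbc, rfl⟩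
  have ha_bc : ⟪a, cross b c⟫ = 0 := by rw [real_inner_comm, ← inner_cross_cyclic, habc]
  have hac_b : ⟪cross a c, b⟫ = 0 := by
    rw [inner_cross_cyclic, cross_anticomm b c, inner_neg_left, ← inner_cross_cyclic, habc,
      neg_zero]
  have t056 : IsQuaternionTriple a (cross b c) (cross a (cross b c)) :=
    ⟨ha, t135.rotate.rotate.inner_self_left, ha_bc, rfl⟩
  have t416 : IsQuaternionTriple (cross a c) b (cross a (cross b c)) := by
    refine ⟨t034.rotate.rotate.inner_self_left, hb, hac_b, ?_⟩
    rw [cross_anticomm, cross_cross_of_orthogonal ((real_inner_comm _ _).trans hab) hbc hac,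
      neg_neg]
  have t326 : IsQuaternionTriple c (cross a b) (cross a (cross b c)) := by
    refine ⟨hc, t012.rotate.rotate.inner_self_left, (real_inner_comm _ _).trans habc, ?_⟩
    rw [cross_cross_of_orthogonal ((real_inner_comm _ _).trans hac)
      ((real_inner_comm _ _).trans hbc) hab, cross_anticomm b c, map_neg, neg_neg]
  have t425 : IsQuaternionTriple (cross a c) (cross a b) (cross b c) := by
    refine ⟨t034.rotate.rotate.inner_self_left, t012.rotate.rotate.inner_self_left, ?_, ?_⟩
    · rw [inner_cross_cross, real_inner_comm b c, hab, hac, hbc]; ring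
    · rw [cross_cross_of_orthogonal ((real_inner_comm _ _).trans (inner_cross_self_left a c))
        hac_b hab, t416.cross_eq, cross_cross_self, ha_bc, ha]
      simp
  exact ⟨t012, t034, t056, t135, t416, t326, t425⟩

lemma exists_isG2Frame_apply_zero {ξ : V7} (hξ : ‖ξ‖ = 1) : ∃ b, IsG2Frame b ∧ b 0 = ξ := by
  have unit : ∀ {v : V7}, ‖v‖ = 1 → ⟪v, v⟫ = 1 := fun h => by
    rw [real_inner_self_eq_norm_sq, h, one_pow]
  obtain ⟨b, hb, hξb⟩ := exists_norm_eq_one_forall_inner_eq_zero {ξ} (by simp)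
  obtain ⟨c, hc, hc_perp⟩ := exists_norm_eq_one_forall_inner_eq_zero {ξ, b, cross ξ b}
    ((Finset.card_le_three).trans_lt (by simp))
  exact ⟨cayleyFrame ξ b c, isG2Frame_cayleyFrame (unit hξ) (unit hb) (unit hc)
    (hξb ξ (by simp)) (hc_perp ξ (by simp)) (hc_perp b (by simp)) (hc_perp _ (by simp)), rfl⟩

def hyperplaneEmbedding : V6 →ₗᵢ[ℝ] V7 where
  toFun x := !₂[0, x 0, x 5, x 1, -x 4, x 2, -x 3]
  map_add' x y := by ext k; fin_cases k <;> simp <;> ring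
  map_smul' c x := by ext k; fin_cases k <;> simp
  norm_map' x := by
    simp [EuclideanSpace.norm_eq, Fin.sum_univ_seven, Fin.sum_univ_six]
    ring_nf

lemma range_hyperplaneEmbedding :
    Set.range hyperplaneEmbedding =
      ((Submodule.span ℝ ({EuclideanSpace.single 0 1} : Set V7))ᗮ : Submodule ℝ V7) := by
  ext v
  rw [SetLike.mem_coe, Submodule.mem_orthogonal_singleton_iff_inner_right,
    EuclideanSpace.inner_single_left, map_one, one_mul]
  constructor
  · rintro ⟨x, rfl⟩
    rfl
  · intro hv
    refine ⟨!₂[v 1, v 3, v 5, -v 6, -v 4, v 2], ?_⟩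
    ext k; fin_cases k <;> simp [hyperplaneEmbedding, hv]

lemma phi0_single_zero_hyperplaneEmbedding (x y : V6) :
    phi0 (EuclideanSpace.single 0 1) (hyperplaneEmbedding x) (hyperplaneEmbedding y) =
      omega6 x y := by
  simp [phi0, w3, Matrix.det_fin_three, omega6, f2, hyperplaneEmbedding]
  ring

lemma phi0_hyperplaneEmbedding (x y z : V6) :
    phi0 (hyperplaneEmbedding x) (hyperplaneEmbedding y) (hyperplaneEmbedding z) =
      Omega6 x y z := by
  simp [phi0, w3, Matrix.det_fin_three, Omega6, f3, hyperplaneEmbedding]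
  ring

end G2

open G2

theorem exists_su3_structure_on_hyperplane (ξ : V7) (hξ : ‖ξ‖ = 1) :
    ∃ F : V6 →ₗᵢ[ℝ] V7,
      Set.range F = ((Submodule.span ℝ ({ξ} : Set V7))ᗮ : Submodule ℝ V7) ∧
      (∀ x y : V6, phi0 ξ (F x) (F y) = omega6 x y) ∧
      (∀ x y z : V6, phi0 (F x) (F y) (F z) = Omega6 x y z) := by
  obtain ⟨b, hb, hb0⟩ := exists_isG2Frame_apply_zero hξ
  set g := hb.toOrthonormalBasis.repr.symm
  have hg : g (EuclideanSpace.single 0 1) = ξ := by simp [g, hb0]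
  refine ⟨g.toLinearIsometry.comp hyperplaneEmbedding, ?_, fun x y => ?_, fun x y z => ?_⟩
  · rw [LinearIsometry.coe_comp, Set.range_comp, range_hyperplaneEmbedding, ← hg]
    exact g.image_orthogonal_span_singleton _
  · rw [← hg]
    exact (hb.phi0_repr_symm _ _ _).trans (phi0_single_zero_hyperplaneEmbedding x y)
  · exact (hb.phi0_repr_symm _ _ _).trans (phi0_hyperplaneEmbedding x y z)
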